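/- Let Z₁,…,Z_m be independent random elements of a compact metric space M, each with law ν_j satisfying the (a,b)-standard lower bound ν_j(B_ε(u)) ≥ min(1, a·ε^b) for all u in a fixed compact set S and 0 < ε < ε₀. If U = {u₁,…,u_N} ⊆ S is a finite ε-dense subset of S, then P(d_H({Z₁,…,Z_m}, S) > 2ε) ≤ N·exp(−m·min(1, a·ε^b)). -/

import Mathlib

open MeasureTheory Metric
open scoped ENNReal

/-!
If every point `u i` of an `ε`-net of `S` has a sample point within `ε`, then every point of `S`
is within `2ε` of a sample point, so the Hausdorff distance is at most `2ε`. Hence the bad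
event is contained in the union over `i` of the events "no `Z j` hits `ball (u i) ε`". By
independence each of these has probability `∏ⱼ (1 - P(Z j ∈ ball (u i) ε)) ≤ (1 - p)^m`, which
is at most `e^{-mp}`, and a union bound over the `N` net points concludes.
-/

theorem Metric.hausdorffDist_le_two_mul_of_subset_of_net {M ι : Type*} [PseudoMetricSpace M]
    {T S : Set M} {u : ι → M} {ε : ℝ} (hε : 0 ≤ ε) (hTS : T ⊆ S)
    (hnet : ∀ s ∈ S, ∃ i, dist s (u i) < ε) (hhit : ∀ i, ∃ t ∈ T, dist t (u i) < ε) :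
    hausdorffDist T S ≤ 2 * ε := by
  refine hausdorffDist_le_of_mem_dist (by positivity)
    (fun t ht => ⟨t, hTS ht, by simpa using hε⟩) ?_
  intro s hs
  obtain ⟨i, hsi⟩ := hnet s hs
  obtain ⟨t, ht, hti⟩ := hhit i
  refine ⟨t, ht, ?_⟩
  linarith [dist_triangle_right s t (u i)]

theorem ENNReal.one_sub_ofReal_le_ofReal_exp_neg (p : ℝ) :
    1 - ENNReal.ofReal p ≤ ENNReal.ofReal (Real.exp (-p)) := by
  rcases le_total 0 p with hp | hp
  · rw [← ENNReal.ofReal_one, ← ENNReal.ofReal_sub 1 hp]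
    exact ENNReal.ofReal_le_ofReal (Real.one_sub_le_exp_neg p)
  · rw [ENNReal.ofReal_of_nonpos hp, tsub_zero, ENNReal.one_le_ofReal, Real.one_le_exp_iff]
    linarith

section Avoidance

variable {Ω α ι : Type*} [MeasurableSpace Ω] {P : Measure Ω} [IsProbabilityMeasure P]
  [MeasurableSpace α] {A : Set α} {p : ℝ}

theorem measure_preimage_compl_le_exp_neg {X : Ω → α} (hX : Measurable X) (hA : MeasurableSet A)
    (hlow : ENNReal.ofReal p ≤ P (X ⁻¹' A)) :
    P (X ⁻¹' Aᶜ) ≤ ENNReal.ofReal (Real.exp (-p)) :=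
  calc P (X ⁻¹' Aᶜ) = 1 - P (X ⁻¹' A) := by
        rw [Set.preimage_compl, prob_compl_eq_one_sub (hX hA)]
    _ ≤ 1 - ENNReal.ofReal p := tsub_le_tsub_left hlow 1
    _ ≤ ENNReal.ofReal (Real.exp (-p)) := ENNReal.one_sub_ofReal_le_ofReal_exp_neg p

theorem ProbabilityTheory.iIndepFun.measure_iInter_preimage_compl_le_exp_neg [Fintype ι]
    {X : ι → Ω → α} (hindep : ProbabilityTheory.iIndepFun X P) (hX : ∀ j, Measurable (X j))
    (hA : MeasurableSet A) (hlow : ∀ j, ENNReal.ofReal p ≤ P (X j ⁻¹' A)) :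
    P (⋂ j, X j ⁻¹' Aᶜ) ≤ ENNReal.ofReal (Real.exp (-(Fintype.card ι : ℝ) * p)) := by
  have hprod : P (⋂ j, X j ⁻¹' Aᶜ) = ∏ j, P (X j ⁻¹' Aᶜ) := by
    simpa using hindep.measure_inter_preimage_eq_mul Finset.univ (sets := fun _ => Aᶜ)
      (fun _ _ => hA.compl)
  calc P (⋂ j, X j ⁻¹' Aᶜ) = ∏ j, P (X j ⁻¹' Aᶜ) := hprod
    _ ≤ ∏ _j : ι, ENNReal.ofReal (Real.exp (-p)) :=
        Finset.prod_le_prod' fun j _ => measure_preimage_compl_le_exp_neg (hX j) hA (hlow j)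
    _ = ENNReal.ofReal (Real.exp (-(Fintype.card ι : ℝ) * p)) := by
        rw [Finset.prod_const, Finset.card_univ, ← ENNReal.ofReal_pow (Real.exp_pos _).le,
          ← Real.exp_nat_mul]
        ring_nf

end Avoidance

theorem prob_hausdorff_gt_general {Ω : Type*} [MeasurableSpace Ω]
    (P : Measure Ω) [IsProbabilityMeasure P]
    {M : Type*} [MetricSpace M] [MeasurableSpace M] [BorelSpace M]
    (S : Set M)
    (a b ε : ℝ)
    (hε : 0 < ε)
    (m : ℕ) (Z : Fin m → Ω → M) (hmeas : ∀ j, Measurable (Z j))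
    (hindep : ProbabilityTheory.iIndepFun Z P)
    (hinS : ∀ j, ∀ᵐ ω ∂P, Z j ω ∈ S)
    (hlow : ∀ j, ∀ u ∈ S,
      ENNReal.ofReal (min 1 (a * ε ^ b)) ≤ P {ω | Z j ω ∈ ball u ε})
    (N : ℕ) (u : Fin N → M) (hu : ∀ i, u i ∈ S)
    (hdense : ∀ s ∈ S, ∃ i, dist s (u i) < ε) :
    P {ω | 2 * ε < hausdorffDist (Set.range fun j => Z j ω) S}
      ≤ (N : ℝ≥0∞) * ENNReal.ofReal (Real.exp (-(m : ℝ) * min 1 (a * ε ^ b))) := by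
  have hbad : {ω | 2 * ε < hausdorffDist (Set.range fun j => Z j ω) S}
      ≤ᵐ[P] ⋃ i, ⋂ j, Z j ⁻¹' (ball (u i) ε)ᶜ := by
    filter_upwards [ae_all_iff.2 hinS] with ω hωS (hfar : 2 * ε < _)
    change ω ∈ ⋃ i, ⋂ j, Z j ⁻¹' (ball (u i) ε)ᶜ
    by_contra hmiss
    simp only [Set.mem_iUnion, Set.mem_iInter, Set.mem_preimage, Set.mem_compl_iff, mem_ball,
      not_exists, not_forall, not_not] at hmiss
    refine (hausdorffDist_le_two_mul_of_subset_of_net hε.le (Set.range_subset_iff.2 hωS) hdense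
      fun i => ?_).not_gt hfar
    obtain ⟨j, hj⟩ := hmiss i
    exact ⟨Z j ω, ⟨j, rfl⟩, hj⟩
  calc P {ω | 2 * ε < hausdorffDist (Set.range fun j => Z j ω) S}
      ≤ P (⋃ i, ⋂ j, Z j ⁻¹' (ball (u i) ε)ᶜ) := measure_mono_ae hbad
    _ ≤ ∑ i, P (⋂ j, Z j ⁻¹' (ball (u i) ε)ᶜ) := measure_iUnion_fintype_le P _
    _ ≤ ∑ _i : Fin N, ENNReal.ofReal (Real.exp (-(m : ℝ) * min 1 (a * ε ^ b))) :=
        Finset.sum_le_sum fun i _ => by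
          simpa using hindep.measure_iInter_preimage_compl_le_exp_neg hmeas measurableSet_ball
            fun j => hlow j (u i) (hu i)
    _ = (N : ℝ≥0∞) * ENNReal.ofReal (Real.exp (-(m : ℝ) * min 1 (a * ε ^ b))) := by simp

/-- Concentration of the empirical support: for independent points `Z₁,…,Z_m` taking
values a.s. in the compact set `S` and satisfying the `(a,b)`-standard lower bound on
balls centered in `S`, and for a finite `ε`-dense subset `{u₁,…,u_N}` of `S`, the
probability that the Hausdorff distance between `{Z₁,…,Z_m}` and `S` exceeds `2ε` is at
most `N exp(−m min(1, a ε^b))`. -/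
theorem prob_hausdorff_gt {Ω : Type*} [MeasurableSpace Ω]
    (P : Measure Ω) [IsProbabilityMeasure P]
    {M : Type*} [MetricSpace M] [CompactSpace M] [MeasurableSpace M] [BorelSpace M]
    (S : Set M) (hS : IsCompact S) (hSne : S.Nonempty)
    (a b ε₀ ε : ℝ) (ha : 0 < a) (hb : 0 < b)
    (hε₀ : ε₀ ∈ Set.Ioo (0 : ℝ) 1) (hε : 0 < ε) (hεlt : ε < ε₀)
    (m : ℕ) (hm : 0 < m) (Z : Fin m → Ω → M) (hmeas : ∀ j, Measurable (Z j))
    (hindep : ProbabilityTheory.iIndepFun Z P)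
    (hinS : ∀ j, ∀ᵐ ω ∂P, Z j ω ∈ S)
    (hlow : ∀ j, ∀ u ∈ S,
      ENNReal.ofReal (min 1 (a * ε ^ b)) ≤ P {ω | Z j ω ∈ ball u ε})
    (N : ℕ) (u : Fin N → M) (hu : ∀ i, u i ∈ S)
    (hdense : ∀ s ∈ S, ∃ i, dist s (u i) < ε) :
    P {ω | 2 * ε < hausdorffDist (Set.range fun j => Z j ω) S}
      ≤ (N : ℝ≥0∞) * ENNReal.ofReal (Real.exp (-(m : ℝ) * min 1 (a * ε ^ b))) :=
  prob_hausdorff_gt_general P S a b ε hε m Z hmeas hindep hinS hlow N u hu hdense
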